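/- Let C = 1/(q+1), Δ₂ = C² − 4h/(q+1), suppose Δ₂ > 0, let x₈ = (C + √Δ₂)/2, assume m < x₈, and set s₂ = (2x₈ + q·x₈ − 1)/(m − x₈). Let J be the Jacobian matrix of F at E₈ = (x₈, x₈), with trace s·(m − x₈) + (1 − 2x₈ − q·x₈) and determinant s·(m − x₈)·(1 − 2x₈ − 2q·x₈) > 0. Then: (i) if s > s₂, the trace of J is strictly negative; (ii) if s < s₂, the trace of J is strictly positive; (iii) if s = s₂, the trace of J is zero and the eigenvalues of J are the purely imaginary pair ±i·√(det J). -/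

import Mathlib

/-!
At `E₈ = (x₈, x₈)` the factor `1 - y/x` of the predator equation vanishes, which makes the
Jacobian `[[1 - 2x₈ - q x₈, -q x₈], [s(x₈ - m), s(m - x₈)]]`. As `x₈` is the larger root of
`(q+1)x² - x + h`, we have `2(q+1)x₈ = 1 + (q+1)√Δ₂ > 1`, so with `m < x₈` the determinant
`s(m - x₈)(1 - 2(q+1)x₈)` is positive. The trace equals `(m - x₈)(s - s₂)`, affine in `s` with
negative slope, which gives the three cases; at `s = s₂` the characteristic polynomial is
`z² + det J`, with roots `±i√(det J)`.
-/

/-- The predator–prey vector field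
    `F(x,y) = (x(1-x) - q x y - h, s y (1 - y/x)(y - m))`. -/
noncomputable def F (q s h m : ℝ) (p : ℝ × ℝ) : ℝ × ℝ :=
  (p.1 * (1 - p.1) - q * p.1 * p.2 - h, s * p.2 * (1 - p.2 / p.1) * (p.2 - m))

/-- The continuous linear map `ℝ² → ℝ²` with matrix `[[a, b], [c, d]]`. -/
noncomputable def clm (a b c d : ℝ) : (ℝ × ℝ) →L[ℝ] (ℝ × ℝ) :=
  (a • ContinuousLinearMap.fst ℝ ℝ ℝ + b • ContinuousLinearMap.snd ℝ ℝ ℝ).prod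
    (c • ContinuousLinearMap.fst ℝ ℝ ℝ + d • ContinuousLinearMap.snd ℝ ℝ ℝ)

open ContinuousLinearMap in
theorem hasFDerivAt_F {q s h m x y : ℝ} (hx : x ≠ 0) :
    HasFDerivAt (F q s h m)
      (clm (1 - 2*x - q*y) (-q*x) (s*y^2*(y - m)/x^2)
        (s*((1 - 2*y/x)*(y - m) + y*(1 - y/x)))) (x, y) := by
  have hfst : HasFDerivAt (fun p : ℝ × ℝ => p.1) (fst ℝ ℝ ℝ) (x, y) := hasFDerivAt_fst
  have hsnd : HasFDerivAt (fun p : ℝ × ℝ => p.2) (snd ℝ ℝ ℝ) (x, y) := hasFDerivAt_snd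
  have hprey := ((hfst.mul ((hasFDerivAt_const 1 _).sub hfst)).sub
    ((hfst.const_mul q).mul hsnd)).sub_const h
  have hpred := (((hsnd.const_mul s).mul
    ((hasFDerivAt_const 1 _).sub (hsnd.mul ((hasFDerivAt_inv hx).comp _ hfst)))).mul
    (hsnd.sub_const m))
  have hF : F q s h m = fun p : ℝ × ℝ =>
      (p.1 * (1 - p.1) - q * p.1 * p.2 - h, s * p.2 * (1 - p.2 * p.1⁻¹) * (p.2 - m)) := by
    funext p; simp only [F, div_eq_mul_inv]
  rw [hF]
  refine (hprey.prodMk hpred).congr_fderiv ?_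
  ext <;> simp only [clm, Pi.sub_apply, Pi.mul_apply, Function.comp_apply, comp_apply, inl_apply,
    inr_apply, prod_apply, add_apply, sub_apply, smul_apply, zero_apply, coe_fst', coe_snd',
    smul_eq_mul, toSpanSingleton_apply] <;> ring

theorem hasFDerivAt_F_diag {q s h m x : ℝ} (hx : x ≠ 0) :
    HasFDerivAt (F q s h m) (clm (1 - 2*x - q*x) (-q*x) (s*(x - m)) (s*(m - x))) (x, x) := by
  convert hasFDerivAt_F (y := x) hx using 2
  · field_simp
  · field_simp; ring

theorem Matrix.mem_spectrum_fin_two_iff {K : Type*} [Field K] (M : Matrix (Fin 2) (Fin 2) K)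
    (z : K) : z ∈ spectrum K M ↔ z ^ 2 - M.trace * z + M.det = 0 := by
  simp [Matrix.mem_spectrum_iff_isRoot_charpoly, Matrix.charpoly_fin_two]

open Complex in
theorem Matrix.spectrum_map_ofReal_of_trace_eq_zero {A : Matrix (Fin 2) (Fin 2) ℝ}
    (htr : A.trace = 0) (hdet : 0 < A.det) :
    spectrum ℂ (A.map ofReal) = {I * (√A.det : ℂ), -(I * (√A.det : ℂ))} := by
  have htr' : (A.map ofReal).trace = 0 := by
    rw [Matrix.trace, ← ofReal_zero, ← htr, Matrix.trace, ofReal_sum]; rfl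
  have hdet' : (A.map ofReal).det = ((√A.det : ℝ) : ℂ) ^ 2 := by
    rw [← ofReal_pow, Real.sq_sqrt hdet.le]; exact (RingHom.map_det ofRealHom A).symm
  ext z
  have hfactor : z ^ 2 - 0 * z + ((√A.det : ℝ) : ℂ) ^ 2
      = (z - I * (√A.det : ℂ)) * (z + I * (√A.det : ℂ)) := by
    linear_combination ((√A.det : ℝ) : ℂ) ^ 2 * I_sq
  rw [Matrix.mem_spectrum_fin_two_iff, htr', hdet', hfactor, mul_eq_zero, sub_eq_zero,
    add_eq_zero_iff_eq_neg, Set.mem_insert_iff, Set.mem_singleton_iff]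

theorem stmt16_general (q s h m x8 s2 : ℝ) (hq : 0 < q) (hs : 0 < s)
    (hΔ : 0 < (1/(q+1))^2 - 4*h/(q+1))
    (hx8 : x8 = (1/(q+1) + Real.sqrt ((1/(q+1))^2 - 4*h/(q+1)))/2)
    (hm : m < x8) (hs2 : s2 = (2*x8 + q*x8 - 1)/(m - x8)) :
    HasFDerivAt (F q s h m)
      (clm (1 - 2*x8 - q*x8) (-q*x8) (s*(x8 - m)) (s*(m - x8))) ((x8, x8) : ℝ × ℝ) ∧
    (!![1 - 2*x8 - q*x8, -q*x8; s*(x8 - m), s*(m - x8)] : Matrix (Fin 2) (Fin 2) ℝ).trace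
      = s*(m - x8) + (1 - 2*x8 - q*x8) ∧
    (!![1 - 2*x8 - q*x8, -q*x8; s*(x8 - m), s*(m - x8)] : Matrix (Fin 2) (Fin 2) ℝ).det
      = s*(m - x8)*(1 - 2*x8 - 2*q*x8) ∧
    0 < (!![1 - 2*x8 - q*x8, -q*x8; s*(x8 - m), s*(m - x8)] :
      Matrix (Fin 2) (Fin 2) ℝ).det ∧
    (s2 < s →
      (!![1 - 2*x8 - q*x8, -q*x8; s*(x8 - m), s*(m - x8)] :
        Matrix (Fin 2) (Fin 2) ℝ).trace < 0) ∧
    (s < s2 →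
      0 < (!![1 - 2*x8 - q*x8, -q*x8; s*(x8 - m), s*(m - x8)] :
        Matrix (Fin 2) (Fin 2) ℝ).trace) ∧
    (s = s2 →
      (!![1 - 2*x8 - q*x8, -q*x8; s*(x8 - m), s*(m - x8)] :
        Matrix (Fin 2) (Fin 2) ℝ).trace = 0 ∧
      spectrum ℂ ((!![1 - 2*x8 - q*x8, -q*x8; s*(x8 - m), s*(m - x8)] :
          Matrix (Fin 2) (Fin 2) ℝ).map Complex.ofReal) =
        {Complex.I * (Real.sqrt ((!![1 - 2*x8 - q*x8, -q*x8; s*(x8 - m), s*(m - x8)] :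
            Matrix (Fin 2) (Fin 2) ℝ).det) : ℂ),
         -(Complex.I * (Real.sqrt ((!![1 - 2*x8 - q*x8, -q*x8; s*(x8 - m), s*(m - x8)] :
            Matrix (Fin 2) (Fin 2) ℝ).det) : ℂ))}) := by
  set J : Matrix (Fin 2) (Fin 2) ℝ := !![1 - 2*x8 - q*x8, -q*x8; s*(x8 - m), s*(m - x8)]
  have hq1 : 0 < q + 1 := by linarith
  have hx8_pos : 0 < x8 := by rw [hx8]; positivity
  have hx8_large : 1 < 2*(q + 1)*x8 := by
    have hsqrt : 0 < (q + 1) * √((1/(q+1))^2 - 4*h/(q+1)) := mul_pos hq1 (Real.sqrt_pos.2 hΔ)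
    have : 2*(q + 1)*x8 = 1 + (q + 1) * √((1/(q+1))^2 - 4*h/(q+1)) := by
      rw [hx8]; field_simp
    linarith
  have htr : J.trace = s*(m - x8) + (1 - 2*x8 - q*x8) := by
    rw [Matrix.trace_fin_two_of]; ring
  have hdet : J.det = s*(m - x8)*(1 - 2*x8 - 2*q*x8) := by
    rw [Matrix.det_fin_two_of]; ring
  have hdet_pos : 0 < J.det := by
    rw [hdet]
    exact mul_pos_of_neg_of_neg (mul_neg_of_pos_of_neg hs (by linarith)) (by linarith)
  have htr_eq : J.trace = (m - x8) * (s - s2) := by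
    rw [htr, hs2]; field_simp [(sub_neg.2 hm).ne]; ring
  refine ⟨hasFDerivAt_F_diag hx8_pos.ne', htr, hdet, hdet_pos, fun hlt => ?_, fun hlt => ?_,
    fun heq => ?_⟩
  · rw [htr_eq]; exact mul_neg_of_neg_of_pos (by linarith) (by linarith)
  · rw [htr_eq]; exact mul_pos_of_neg_of_neg (by linarith) (by linarith)
  · have htr0 : J.trace = 0 := by rw [htr_eq, heq, sub_self, mul_zero]
    exact ⟨htr0, Matrix.spectrum_map_ofReal_of_trace_eq_zero htr0 hdet_pos⟩

/-- With `C = 1/(q+1)`, `Δ₂ = C² - 4h/(q+1) > 0`, `x₈ = (C + √Δ₂)/2`, `m < x₈`,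
`s₂ = (2x₈ + q x₈ - 1)/(m - x₈)`, and `J` the Jacobian of `F` at `E₈ = (x₈, x₈)` (trace
`s(m - x₈) + (1 - 2x₈ - q x₈)`, determinant `s(m - x₈)(1 - 2x₈ - 2q x₈) > 0`):
(i) if `s > s₂` then `tr J < 0`; (ii) if `s < s₂` then `tr J > 0`; (iii) if `s = s₂` then
`tr J = 0` and the eigenvalues of `J` are the purely imaginary pair `± i√(det J)`. -/
theorem stmt16 (q s h m x8 s2 : ℝ) (hq : 0 < q) (hs : 0 < s) (hh : 0 < h)
    (hm0 : 0 < m) (hm1 : m < 1)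
    (hΔ : 0 < (1/(q+1))^2 - 4*h/(q+1))
    (hx8 : x8 = (1/(q+1) + Real.sqrt ((1/(q+1))^2 - 4*h/(q+1)))/2)
    (hm : m < x8) (hs2 : s2 = (2*x8 + q*x8 - 1)/(m - x8)) :
    HasFDerivAt (F q s h m)
      (clm (1 - 2*x8 - q*x8) (-q*x8) (s*(x8 - m)) (s*(m - x8))) ((x8, x8) : ℝ × ℝ) ∧
    (!![1 - 2*x8 - q*x8, -q*x8; s*(x8 - m), s*(m - x8)] : Matrix (Fin 2) (Fin 2) ℝ).trace
      = s*(m - x8) + (1 - 2*x8 - q*x8) ∧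
    (!![1 - 2*x8 - q*x8, -q*x8; s*(x8 - m), s*(m - x8)] : Matrix (Fin 2) (Fin 2) ℝ).det
      = s*(m - x8)*(1 - 2*x8 - 2*q*x8) ∧
    0 < (!![1 - 2*x8 - q*x8, -q*x8; s*(x8 - m), s*(m - x8)] :
      Matrix (Fin 2) (Fin 2) ℝ).det ∧
    (s2 < s →
      (!![1 - 2*x8 - q*x8, -q*x8; s*(x8 - m), s*(m - x8)] :
        Matrix (Fin 2) (Fin 2) ℝ).trace < 0) ∧
    (s < s2 →
      0 < (!![1 - 2*x8 - q*x8, -q*x8; s*(x8 - m), s*(m - x8)] :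
        Matrix (Fin 2) (Fin 2) ℝ).trace) ∧
    (s = s2 →
      (!![1 - 2*x8 - q*x8, -q*x8; s*(x8 - m), s*(m - x8)] :
        Matrix (Fin 2) (Fin 2) ℝ).trace = 0 ∧
      spectrum ℂ ((!![1 - 2*x8 - q*x8, -q*x8; s*(x8 - m), s*(m - x8)] :
          Matrix (Fin 2) (Fin 2) ℝ).map Complex.ofReal) =
        {Complex.I * (Real.sqrt ((!![1 - 2*x8 - q*x8, -q*x8; s*(x8 - m), s*(m - x8)] :
            Matrix (Fin 2) (Fin 2) ℝ).det) : ℂ),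
         -(Complex.I * (Real.sqrt ((!![1 - 2*x8 - q*x8, -q*x8; s*(x8 - m), s*(m - x8)] :
            Matrix (Fin 2) (Fin 2) ℝ).det) : ℂ))}) :=
  stmt16_general q s h m x8 s2 hq hs hΔ hx8 hm hs2
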